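/- Let $E: \mathcal{B}([0,2\pi)) \to \mathcal{L}(H)$ be a covariant normalized operator measure, i.e., $E([0,2\pi)) = I$ and $R(\theta) E(X) R(\theta)^* = E(X \oplus \theta)$ where $R(\theta) = \sum_{n\in\mathbb{Z}} e^{in\theta} |n\rangle\langle n|$. Then there exist complex numbers $c_{n,m}$ with $c_{n,n} = 1$ such that $\langle n, E(X) m\rangle = c_{n,m}\, (2\pi)^{-1}\int_X e^{i(n-m)\theta}\, d\theta$ for all $n, m \in \mathbb{Z}$ and Borel $X$. -/

import Mathlib

/-!
Fix `n, m` and put `k = n - m`. The matrix element `μ X = ⟪e n, E X (e m)⟫` is σ-additive on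
`[0, 2π)`, and covariance of `E` makes it a twisted-invariant set function:
`μ (X ⊕ θ) = e^{ikθ} μ X`. On intervals, `F t = μ [0, t)` therefore satisfies the cocycle identity
`F (θ + t) = F θ + e^{ikθ} F t`. For `k ≠ 0`, exchanging `θ` and `t` forces
`F t = c (1 - e^{ikt})`; for `k = 0`, `F` is additive and bounded (complex measures are bounded),
hence linear. Either way `μ` agrees with `C e^{ikθ} dθ` on intervals, hence on all Borel sets, as
both are complex measures. Normalization `E [0, 2π) = 1` evaluated on the diagonal gives
`c n n = 1`.
-/

open MeasureTheory Complex

/-- Addition by `θ` modulo `2π` on `[0, 2π)`. -/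
noncomputable def wrapAdd (θ x : ℝ) : ℝ :=
  if x + θ < 2 * Real.pi then x + θ else x + θ - 2 * Real.pi

open Set

def IsSigmaAdditiveOn {α M : Type*} [MeasurableSpace α] [AddCommMonoid M] [TopologicalSpace M]
    (μ : Set α → M) (S : Set α) : Prop :=
  ∀ f : ℕ → Set α, (∀ i, MeasurableSet (f i)) → (∀ i, f i ⊆ S) →
    Pairwise (Function.onFun Disjoint f) → HasSum (fun i => μ (f i)) (μ (⋃ i, f i))

namespace IsSigmaAdditiveOn

section AddCommGroup

variable {α M : Type*} [MeasurableSpace α] [AddCommGroup M] [TopologicalSpace M]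
  [IsTopologicalAddGroup M] [T2Space M] {μ : Set α → M} {S : Set α}

theorem apply_empty (hμ : IsSigmaAdditiveOn μ S) : μ ∅ = 0 := by
  have h := hμ (fun _ => ∅) (fun _ => .empty) (fun _ => empty_subset S)
    (fun _ _ _ => disjoint_bot_left)
  rw [iUnion_empty] at h
  exact tendsto_nhds_unique tendsto_const_nhds h.summable.tendsto_atTop_zero

open scoped Classical in
noncomputable def toVectorMeasure (hμ : IsSigmaAdditiveOn μ S) (hS : MeasurableSet S) :
    VectorMeasure α M where
  measureOf' X := if MeasurableSet X then μ (X ∩ S) else 0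
  empty' := by simp [hμ.apply_empty]
  not_measurable' _ hX := if_neg hX
  m_iUnion' f hf hdisj := by
    simp only [if_pos (hf _), if_pos (MeasurableSet.iUnion hf), iUnion_inter]
    exact hμ _ (fun i => (hf i).inter hS) (fun _ => inter_subset_right)
      (fun _ _ hij => (hdisj hij).mono inter_subset_left inter_subset_left)

theorem toVectorMeasure_apply (hμ : IsSigmaAdditiveOn μ S) (hS : MeasurableSet S) {X : Set α}
    (hX : MeasurableSet X) : hμ.toVectorMeasure hS X = μ (X ∩ S) := by
  classical
  exact if_pos hX

theorem toVectorMeasure_apply_of_subset (hμ : IsSigmaAdditiveOn μ S) (hS : MeasurableSet S)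
    {X : Set α} (hX : MeasurableSet X) (hXS : X ⊆ S) : hμ.toVectorMeasure hS X = μ X := by
  rw [toVectorMeasure_apply hμ hS hX, inter_eq_left.mpr hXS]

theorem apply_union (hμ : IsSigmaAdditiveOn μ S) (hS : MeasurableSet S) {A B : Set α}
    (hA : MeasurableSet A) (hB : MeasurableSet B) (hAS : A ⊆ S) (hBS : B ⊆ S)
    (hAB : Disjoint A B) : μ (A ∪ B) = μ A + μ B := by
  rw [← hμ.toVectorMeasure_apply_of_subset hS (hA.union hB) (union_subset hAS hBS),
    VectorMeasure.of_union hAB hA hB, hμ.toVectorMeasure_apply_of_subset hS hA hAS,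
    hμ.toVectorMeasure_apply_of_subset hS hB hBS]

end AddCommGroup

variable {α E : Type*} [MeasurableSpace α] [NormedAddCommGroup E] [NormedSpace ℝ E]
  {μ : Set α → E} {S : Set α}

theorem exists_norm_le (hμ : IsSigmaAdditiveOn μ S) (hS : MeasurableSet S) :
    ∃ B, ∀ X, MeasurableSet X → X ⊆ S → ‖μ X‖ ≤ B :=
  ⟨_, fun _ hX hXS => hμ.toVectorMeasure_apply_of_subset hS hX hXS ▸
    VectorMeasure.norm_apply_le_bound⟩

theorem eq_setIntegral_of_Ico [CompleteSpace E] {μ : Set ℝ → E} {l u : ℝ}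
    (hμ : IsSigmaAdditiveOn μ (Ico l u)) {f : ℝ → E} (hf : IntegrableOn f (Ico l u))
    (hIco : ∀ a b, l ≤ a → a ≤ b → b ≤ u → μ (Ico a b) = ∫ x in Ico a b, f x)
    {X : Set ℝ} (hX : MeasurableSet X) (hXS : X ⊆ Ico l u) : μ X = ∫ x in X, f x := by
  have hint := hf.integrable_indicator measurableSet_Ico
  have hIco' : ∀ a b, μ (Ico a b ∩ Ico l u) = ∫ x in Ico a b ∩ Ico l u, f x := by
    intro a b
    rw [Ico_inter_Ico]
    rcases le_or_gt (a ⊔ l) (b ⊓ u) with hle | hlt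
    · exact hIco _ _ le_sup_right hle inf_le_right
    · rw [Ico_eq_empty_of_le hlt.le, hμ.apply_empty, setIntegral_empty]
  have hν :
      hμ.toVectorMeasure measurableSet_Ico = volume.withDensityᵥ ((Ico l u).indicator f) := by
    refine VectorMeasure.ext_of_generateFrom _ ?_
      (BorelSpace.measurable_eq.trans (borel_eq_generateFrom_Ico ℝ)) (isPiSystem_Ico id id) ?_
    · rintro _ ⟨a, b, -, rfl⟩
      rw [toVectorMeasure_apply _ _ measurableSet_Ico, withDensityᵥ_apply hint measurableSet_Ico,
        setIntegral_indicator measurableSet_Ico, hIco']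
    · rw [toVectorMeasure_apply _ _ .univ, withDensityᵥ_apply hint .univ,
        setIntegral_indicator measurableSet_Ico, univ_inter, ← inter_self (Ico l u), hIco']
  rw [← hμ.toVectorMeasure_apply_of_subset measurableSet_Ico hX hXS, hν,
    withDensityᵥ_apply hint hX, setIntegral_indicator measurableSet_Ico, inter_eq_left.mpr hXS]

end IsSigmaAdditiveOn

section AdditiveOnInterval

variable {E : Type*} [NormedAddCommGroup E] [NormedSpace ℝ E] {G : ℝ → E} {L : ℝ}

theorem apply_natCast_mul_of_add
    (hadd : ∀ s t, 0 ≤ s → 0 ≤ t → s + t ≤ L → G (s + t) = G s + G t)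
    (n : ℕ) {x : ℝ} (hx : 0 ≤ x) (hnx : n * x ≤ L) : G (n * x) = (n : ℝ) • G x := by
  induction n with
  | zero =>
    have h0 := hadd 0 0 le_rfl le_rfl (by simpa using hnx)
    simp only [add_zero, left_eq_add] at h0
    simp [h0]
  | succ n ih =>
    have hn : (n : ℝ) * x ≤ L := by push_cast at hnx; nlinarith
    rw [Nat.cast_succ, add_one_mul, hadd _ _ (by positivity) hx (by push_cast at hnx; linarith),
      ih hn, add_smul, one_smul]

theorem eq_zero_of_add_of_norm_le {B : ℝ}
    (hadd : ∀ s t, 0 ≤ s → 0 ≤ t → s + t ≤ L → G (s + t) = G s + G t)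
    (hB : ∀ t, 0 ≤ t → t ≤ L → ‖G t‖ ≤ B) (hL : G L = 0) {t : ℝ} (ht : 0 ≤ t) (htL : t ≤ L) :
    G t = 0 := by
  rcases htL.eq_or_lt with rfl | htL
  · exact hL
  have hLpos : 0 < L := ht.trans_lt htL
  -- Writing `t = j (L / N) + r` with `0 ≤ r < L / N` gives `N • G t = N • G r = G (N r)`.
  have hbound : ∀ N : ℕ, 0 < N → N * ‖G t‖ ≤ B := by
    intro N hN
    have hN' : (0 : ℝ) < N := by exact_mod_cast hN
    set δ := L / N with hδ
    have hδpos : 0 < δ := by positivity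
    have hNδ : N * δ = L := by rw [hδ]; field_simp
    set j := ⌊t / δ⌋₊
    have hjt : j * δ ≤ t := (le_div_iff₀ hδpos).mp (Nat.floor_le (by positivity))
    have htj : t < (j + 1) * δ := (div_lt_iff₀ hδpos).mp (Nat.lt_floor_add_one _)
    set r := t - j * δ
    have hr : 0 ≤ r := by linarith
    have hNr : N * r ≤ L := by rw [← hNδ]; nlinarith
    have hGδ : G δ = 0 := by
      have := apply_natCast_mul_of_add hadd N hδpos.le hNδ.le
      rw [hNδ, hL] at this
      exact (smul_eq_zero.mp this.symm).resolve_left hN'.ne'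
    have hGt : G t = G r := by
      rw [show t = j * δ + r by ring, hadd _ _ (by positivity) hr (by linarith),
        apply_natCast_mul_of_add hadd j hδpos.le (by linarith), hGδ, smul_zero, zero_add]
    calc N * ‖G t‖ = ‖(N : ℝ) • G r‖ := by rw [hGt, norm_smul, Real.norm_of_nonneg hN'.le]
      _ = ‖G (N * r)‖ := by rw [apply_natCast_mul_of_add hadd N hr hNr]
      _ ≤ B := hB _ (by positivity) hNr
  by_contra hne
  have hpos : 0 < ‖G t‖ := norm_pos_iff.mpr hne
  obtain ⟨N, hN⟩ := exists_nat_gt (B / ‖G t‖)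
  have hB0 : 0 ≤ B := (norm_nonneg _).trans (hB t ht htL.le)
  have := hbound N (by exact_mod_cast (div_nonneg hB0 hpos.le).trans_lt hN)
  rw [div_lt_iff₀ hpos] at hN
  linarith

theorem eq_div_smul_of_add_of_norm_le {B : ℝ} (hL : 0 < L)
    (hadd : ∀ s t, 0 ≤ s → 0 ≤ t → s + t ≤ L → G (s + t) = G s + G t)
    (hB : ∀ t, 0 ≤ t → t ≤ L → ‖G t‖ ≤ B) {t : ℝ} (ht : 0 ≤ t) (htL : t ≤ L) :
    G t = (t / L) • G L := by
  have key := eq_zero_of_add_of_norm_le (G := fun t => G t - (t / L) • G L) (B := B + B)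
    (fun s t hs ht hst => by simp only [hadd s t hs ht hst, add_div, add_smul]; abel)
    (fun t ht htL => by
      refine (norm_sub_le _ _).trans (add_le_add (hB t ht htL) ?_)
      rw [norm_smul, Real.norm_of_nonneg (by positivity)]
      exact (mul_le_of_le_one_left (norm_nonneg _) ((div_le_one hL).mpr htL)).trans
        (hB L hL.le le_rfl))
    (by simp [div_self hL.ne']) ht htL
  exact sub_eq_zero.mp key

end AdditiveOnInterval

open Real in
theorem exp_I_mul_intCast_mul_pi_div_abs {k : ℤ} (hk : k ≠ 0) :
    exp (I * k * ↑(π / |(k : ℝ)|)) = -1 := by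
  rcases abs_choice (k : ℝ) with habs | habs <;> rw [habs]
  · convert exp_pi_mul_I using 2; push_cast; field_simp
  · convert exp_neg_pi_mul_I using 2; push_cast; field_simp

open Real in
theorem exists_eq_mul_one_sub_exp_of_cocycle {F : ℝ → ℂ} {k : ℤ} (hk : k ≠ 0)
    (hF : ∀ θ t, 0 ≤ θ → 0 ≤ t → θ + t ≤ 2 * π →
      F (θ + t) = F θ + exp (I * k * θ) * F t) :
    ∃ c, ∀ t, 0 ≤ t → t ≤ 2 * π → F t = c * (1 - exp (I * k * t)) := by
  set θ₀ := π / |(k : ℝ)|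
  have hk1 : 1 ≤ |(k : ℝ)| := by exact_mod_cast Int.one_le_abs hk
  have hθ₀ : 0 < θ₀ := by positivity
  have hθ₀π : θ₀ ≤ π := div_le_self pi_pos.le hk1
  have hχθ₀ : exp (I * k * θ₀) = -1 := exp_I_mul_intCast_mul_pi_div_abs hk
  -- Comparing the cocycle identity for `θ₀ + t` and `t + θ₀`.
  have hsmall : ∀ t, 0 ≤ t → t + θ₀ ≤ 2 * π → F t = F θ₀ / 2 * (1 - exp (I * k * t)) := by
    intro t ht htθ₀
    have h1 := hF θ₀ t hθ₀.le ht (by linarith)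
    have h2 := hF t θ₀ ht hθ₀.le htθ₀
    rw [add_comm, h2, hχθ₀] at h1
    linear_combination h1 / 2
  refine ⟨F θ₀ / 2, fun t ht ht2π => ?_⟩
  -- As `θ₀ ≤ π`, a `t` too large for `hsmall` is reached from `t - θ₀` by one more step.
  rcases le_total (t + θ₀) (2 * π) with h | h
  · exact hsmall t ht h
  · have hχ : exp (I * k * ↑(t - θ₀)) = -exp (I * k * t) := by
      rw [ofReal_sub, mul_sub, Complex.exp_sub, hχθ₀, div_neg, div_one]
    have := hF (t - θ₀) θ₀ (by linarith) hθ₀.le (by linarith)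
    rw [sub_add_cancel, hsmall (t - θ₀) (by linarith) (by linarith), hχ] at this
    rw [this]
    ring

namespace HilbertBasis

variable {ι 𝕜 H : Type*} [RCLike 𝕜] [NormedAddCommGroup H] [InnerProductSpace 𝕜 H]
  [CompleteSpace H] (e : HilbertBasis ι 𝕜 H) {T : H →L[𝕜] H} {d : ι → 𝕜}

theorem adjoint_apply_of_apply_eq_smul (hT : ∀ i, T (e i) = d i • e i) (j : ι) :
    T.adjoint (e j) = starRingEnd 𝕜 (d j) • e j := by
  classical
  refine e.repr.injective (lp.ext (funext fun i => ?_))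
  simp only [HilbertBasis.repr_apply_apply, ContinuousLinearMap.adjoint_inner_right, hT,
    inner_smul_left, inner_smul_right, orthonormal_iff_ite.mp e.orthonormal]
  split_ifs with h <;> simp [h]

theorem inner_mul_mul_adjoint_apply (hT : ∀ i, T (e i) = d i • e i) (A : H →L[𝕜] H) (i j : ι) :
    inner 𝕜 (e i) ((T * A * T.adjoint) (e j)) =
      d i * starRingEnd 𝕜 (d j) * inner 𝕜 (e i) (A (e j)) := by
  rw [mul_apply_eq_comp, mul_apply_eq_comp,
    ← ContinuousLinearMap.adjoint_inner_left, e.adjoint_apply_of_apply_eq_smul hT,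
    e.adjoint_apply_of_apply_eq_smul hT, map_smul, inner_smul_left, inner_smul_right,
    RCLike.conj_conj, mul_assoc]

end HilbertBasis

theorem wrapAdd_image_Ico {θ a b : ℝ} (h : b + θ ≤ 2 * Real.pi) :
    wrapAdd θ '' Ico a b = Ico (a + θ) (b + θ) := by
  rw [← image_add_const_Ico]
  exact image_congr fun x hx => if_pos (by linarith [hx.2])

theorem setIntegral_Ico_eq_intervalIntegral {E : Type*} [NormedAddCommGroup E] [NormedSpace ℝ E]
    (f : ℝ → E) {a b : ℝ} (hab : a ≤ b) : ∫ x in Ico a b, f x = ∫ x in a..b, f x := by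
  rw [integral_Ico_eq_integral_Ioo, ← integral_Ioc_eq_integral_Ioo,
    intervalIntegral.integral_of_le hab]

theorem setIntegral_Ico_exp_mul_add (c : ℂ) (a : ℝ) {t : ℝ} (ht : 0 ≤ t) :
    ∫ x in Ico a (a + t), exp (c * x) = exp (c * a) * ∫ x in Ico 0 t, exp (c * x) := by
  rw [setIntegral_Ico_eq_intervalIntegral _ (le_add_of_nonneg_right ht),
    setIntegral_Ico_eq_intervalIntegral _ ht, ← intervalIntegral.integral_const_mul]
  have := intervalIntegral.integral_comp_add_left (fun x => exp (c * x)) a (a := 0) (b := t)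
  rw [add_zero] at this
  simp only [← this, ofReal_add, mul_add, Complex.exp_add]

theorem setIntegral_Ico_zero_exp_mul {c : ℂ} (hc : c ≠ 0) {t : ℝ} (ht : 0 ≤ t) :
    ∫ x in Ico 0 t, exp (c * x) = (exp (c * t) - 1) / c := by
  rw [setIntegral_Ico_eq_intervalIntegral _ ht, integral_exp_mul_complex hc, ofReal_zero,
    mul_zero, Complex.exp_zero]

open Real in
def IsCovariant (μ : Set ℝ → ℂ) (k : ℤ) : Prop :=
  ∀ θ ∈ Ico (0 : ℝ) (2 * π), ∀ X : Set ℝ, MeasurableSet X → X ⊆ Ico 0 (2 * π) →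
    μ (wrapAdd θ '' X) = exp (I * k * θ) * μ X

namespace IsCovariant

open Real

variable {μ : Set ℝ → ℂ} {k : ℤ}

theorem apply_Ico_add (hcov : IsCovariant μ k) (hμ : IsSigmaAdditiveOn μ (Ico 0 (2 * π)))
    {θ t : ℝ} (hθ : 0 ≤ θ) (ht : 0 ≤ t) (hθt : θ + t ≤ 2 * π) :
    μ (Ico θ (θ + t)) = exp (I * k * θ) * μ (Ico 0 t) := by
  rcases ht.eq_or_lt with rfl | ht
  · simp [hμ.apply_empty]
  have := hcov θ ⟨hθ, by linarith⟩ (Ico 0 t) measurableSet_Ico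
    (Ico_subset_Ico_right (by linarith))
  rwa [wrapAdd_image_Ico (by linarith), zero_add, add_comm t] at this

theorem apply_Ico_zero_add (hcov : IsCovariant μ k) (hμ : IsSigmaAdditiveOn μ (Ico 0 (2 * π)))
    {θ t : ℝ} (hθ : 0 ≤ θ) (ht : 0 ≤ t) (hθt : θ + t ≤ 2 * π) :
    μ (Ico 0 (θ + t)) = μ (Ico 0 θ) + exp (I * k * θ) * μ (Ico 0 t) := by
  rw [← Ico_union_Ico_eq_Ico hθ (le_add_of_nonneg_right ht),
    hμ.apply_union measurableSet_Ico measurableSet_Ico measurableSet_Ico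
      (Ico_subset_Ico_right (by linarith)) (Ico_subset_Ico hθ hθt) Ico_disjoint_Ico_same,
    hcov.apply_Ico_add hμ hθ ht hθt]

theorem exists_apply_Ico_zero_eq_mul_integral (hcov : IsCovariant μ k)
    (hμ : IsSigmaAdditiveOn μ (Ico 0 (2 * π))) :
    ∃ C, ∀ t, 0 ≤ t → t ≤ 2 * π → μ (Ico 0 t) = C * ∫ x in Ico 0 t, exp (I * k * x) := by
  have hcocycle := fun θ t => hcov.apply_Ico_zero_add hμ (θ := θ) (t := t)
  rcases eq_or_ne k 0 with rfl | hk
  · obtain ⟨B, hB⟩ := hμ.exists_norm_le measurableSet_Ico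
    refine ⟨μ (Ico 0 (2 * π)) / (2 * π), fun t ht ht2π => ?_⟩
    rw [eq_div_smul_of_add_of_norm_le (G := fun t => μ (Ico 0 t)) (by positivity)
      (fun s t hs ht hst => by simpa using hcocycle s t hs ht hst)
      (fun t _ ht => hB _ measurableSet_Ico (Ico_subset_Ico_right ht)) ht ht2π]
    simp only [Int.cast_zero, mul_zero, zero_mul, Complex.exp_zero, setIntegral_const,
      Real.volume_real_Ico_of_le ht, sub_zero, real_smul, mul_one]
    push_cast
    ring
  · obtain ⟨c, hc⟩ := exists_eq_mul_one_sub_exp_of_cocycle (F := fun t => μ (Ico 0 t)) hk hcocycle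
    have hIk : I * k ≠ 0 := mul_ne_zero I_ne_zero (by exact_mod_cast hk)
    refine ⟨-(I * k) * c, fun t ht ht2π => ?_⟩
    rw [hc t ht ht2π, setIntegral_Ico_zero_exp_mul hIk ht]
    field_simp
    ring

theorem exists_eq_mul_integral (hcov : IsCovariant μ k)
    (hμ : IsSigmaAdditiveOn μ (Ico 0 (2 * π))) :
    ∃ C, ∀ X, MeasurableSet X → X ⊆ Ico 0 (2 * π) → μ X = C * ∫ x in X, exp (I * k * x) := by
  obtain ⟨C, hC⟩ := hcov.exists_apply_Ico_zero_eq_mul_integral hμ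
  refine ⟨C, fun X hX hXS => ?_⟩
  rw [← integral_const_mul]
  refine hμ.eq_setIntegral_of_Ico ?_ (fun a b ha hab hb => ?_) hX hXS
  · exact (continuous_const.mul (by fun_prop)).integrableOn_Icc.mono_set Ico_subset_Icc_self
  · have hb' : a + (b - a) = b := by ring
    rw [integral_const_mul, ← hb', hcov.apply_Ico_add hμ ha (by linarith) (by linarith),
      setIntegral_Ico_exp_mul_add _ a (by linarith), hC _ (by linarith) (by linarith)]
    ring

end IsCovariant

/-- Any covariant normalized (weakly σ-additive) operator measure
`E : B([0,2π)) → L(H)` has matrix elements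
`⟪n, E(X) m⟫ = c_{n,m} (2π)⁻¹ ∫_X e^{i(n-m)θ} dθ` with `c_{n,n} = 1`. -/
theorem covariant_normalized_operator_measure_matrix_form
    {H : Type*} [NormedAddCommGroup H] [InnerProductSpace ℂ H] [CompleteSpace H]
    (e : HilbertBasis ℤ ℂ H)
    (R : ℝ → (H →L[ℂ] H))
    (hR : ∀ (θ : ℝ) (n : ℤ), R θ (e n) = Complex.exp (Complex.I * (n : ℂ) * (θ : ℂ)) • e n)
    (E : Set ℝ → (H →L[ℂ] H))
    (hnorm : E (Set.Ico 0 (2 * Real.pi)) = 1)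
    (hadd : ∀ f : ℕ → Set ℝ, (∀ i, MeasurableSet (f i)) →
      (∀ i, f i ⊆ Set.Ico 0 (2 * Real.pi)) → Pairwise (Function.onFun Disjoint f) →
      ∀ u v : H, HasSum (fun i => (inner ℂ u (E (f i) v) : ℂ))
        (inner ℂ u (E (⋃ i, f i) v) : ℂ))
    (hcov : ∀ θ ∈ Set.Ico (0 : ℝ) (2 * Real.pi),
      ∀ X : Set ℝ, MeasurableSet X → X ⊆ Set.Ico 0 (2 * Real.pi) →
        E (wrapAdd θ '' X) = R θ * E X * ContinuousLinearMap.adjoint (R θ)) :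
    ∃ c : ℤ → ℤ → ℂ, (∀ n, c n n = 1) ∧
      ∀ (n m : ℤ) (X : Set ℝ), MeasurableSet X → X ⊆ Set.Ico 0 (2 * Real.pi) →
        (inner ℂ (e n) (E X (e m)) : ℂ) = c n m * (2 * Real.pi : ℂ)⁻¹ *
          ∫ θ in X, Complex.exp (Complex.I * ((n : ℂ) - (m : ℂ)) * (θ : ℂ)) := by
  have hmatrix (n m : ℤ) : IsCovariant (fun X => inner ℂ (e n) (E X (e m))) (n - m) := by
    intro θ hθ X hX hXS
    simp only [hcov θ hθ X hX hXS, e.inner_mul_mul_adjoint_apply (hR θ), ← Complex.exp_conj,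
      ← Complex.exp_add]
    congr 2
    simp only [map_mul, conj_I, map_intCast, conj_ofReal, Int.cast_sub]
    ring
  choose C hC using fun n m => (hmatrix n m).exists_eq_mul_integral
    (fun f hf hfS hdisj => hadd f hf hfS hdisj (e n) (e m))
  refine ⟨fun n m => 2 * Real.pi * C n m, fun n => ?_, fun n m X hX hXS => ?_⟩
  · have hnn := hC n n _ measurableSet_Ico subset_rfl
    simp only [hnorm, one_apply_eq_self, orthonormal_iff_ite.mp e.orthonormal, if_pos, sub_self,
      Int.cast_zero, mul_zero, zero_mul, Complex.exp_zero, setIntegral_const, Complex.real_smul,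
      Real.volume_real_Ico_of_le Real.two_pi_pos.le, sub_zero, mul_one] at hnn
    push_cast at hnn
    linear_combination -hnn
  · rw [hC n m X hX hXS]
    push_cast
    field_simp
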